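/- arXiv:1508.07523 — 3 statements merged into one kernel-verified Lean document; each statement's English description precedes it below -/
import Mathlib

section
/- Let r = Σ_{n>0}(x^{n²}+x^{2n²}+x^{3n²}+x^{6n²}) and E = Σ_{(n,3)=1, n>0} x^{n²} in Z/2[[x]]. Then p_{3,1}(r²) = E⁴ and p_{3,2}(r²) = E², where p_{3,i} projects onto terms x^n with n ≡ i mod 3. -/
open PowerSeries Classical

/-- `Σ_{n > 0} x^{c·n²}` in `Z/2[[x]]`. -/
noncomputable def thetaC (c : ℕ) : PowerSeries (ZMod 2) :=
  PowerSeries.mk fun n => if ∃ k : ℕ, 0 < k ∧ n = c * k ^ 2 then 1 else 0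

/-- `r = Σ_{n>0} (x^{n²} + x^{2n²} + x^{3n²} + x^{6n²})` in `Z/2[[x]]`. -/
noncomputable def rser : PowerSeries (ZMod 2) :=
  thetaC 1 + thetaC 2 + thetaC 3 + thetaC 6

/-- `E = Σ_{(n,3)=1, n > 0} x^{n²}` in `Z/2[[x]]`. -/
noncomputable def Eser : PowerSeries (ZMod 2) :=
  PowerSeries.mk fun n => if ∃ k : ℕ, Nat.Coprime k 3 ∧ 0 < k ∧ n = k ^ 2 then 1 else 0

/-- `p_{3,i}` : keep only the terms `x^n` with `n ≡ i mod 3`. -/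
noncomputable def p3 (i : ℕ) (f : PowerSeries (ZMod 2)) : PowerSeries (ZMod 2) :=
  PowerSeries.mk fun n => if n % 3 = i then PowerSeries.coeff n f else 0

lemma zmod2_add_self : ∀ a : ZMod 2, a + a = 0 := by decide
lemma zmod2_mul_self : ∀ a : ZMod 2, a * a = a := by decide

lemma coeff_sq (f : PowerSeries (ZMod 2)) (m : ℕ) :
    (PowerSeries.coeff m) (f ^ 2) =
      if 2 ∣ m then (PowerSeries.coeff (m / 2)) f else 0 := by
  rw [pow_two, PowerSeries.coeff_mul]
  have inv0 : ∀ s : Finset (ℕ × ℕ), (∀ p ∈ s, (p.2, p.1) ∈ s) → (∀ p ∈ s, p.1 ≠ p.2) →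
      ∑ p ∈ s, (PowerSeries.coeff p.1) f * (PowerSeries.coeff p.2) f = 0 := by
    intro s hmem hne
    refine Finset.sum_involution (fun p _ => (p.2, p.1)) ?_ ?_ hmem (fun p hp => rfl)
    · intro p hp
      simp only
      rw [mul_comm ((PowerSeries.coeff p.2) f)]
      exact zmod2_add_self _
    · intro p hp _
      have := hne p hp
      intro h
      have h2 : p.2 = p.1 := congrArg Prod.fst h
      exact this h2.symm
  by_cases h : 2 ∣ m
  · obtain ⟨a, rfl⟩ := h
    rw [if_pos ⟨a, rfl⟩, Nat.mul_div_cancel_left _ (by norm_num)]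
    have hmem : (a, a) ∈ Finset.HasAntidiagonal.antidiagonal (2 * a) := by
      simp [two_mul]
    rw [← Finset.add_sum_erase _ _ hmem]
    have h0 : ∑ p ∈ (Finset.HasAntidiagonal.antidiagonal (2*a)).erase (a,a),
        (PowerSeries.coeff p.1) f * (PowerSeries.coeff p.2) f = 0 := by
      apply inv0
      · intro p hp
        simp only [Finset.mem_erase, Finset.HasAntidiagonal.mem_antidiagonal] at hp ⊢
        refine ⟨fun h => hp.1 ?_, by omega⟩
        rw [Prod.ext_iff] at h ⊢
        simp only at h ⊢
        omega
      · intro p hp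
        simp only [Finset.mem_erase, Finset.HasAntidiagonal.mem_antidiagonal] at hp
        intro he
        apply hp.1
        rw [Prod.ext_iff]
        constructor <;> simp <;> omega
    rw [h0, add_zero]
    exact zmod2_mul_self _
  · rw [if_neg h]
    apply inv0
    · intro p hp; simp only [Finset.HasAntidiagonal.mem_antidiagonal] at hp ⊢; omega
    · intro p hp he
      simp only [Finset.HasAntidiagonal.mem_antidiagonal] at hp
      omega

lemma sq_mod3 (k : ℕ) : (k % 3 = 0 ∧ k^2 % 3 = 0) ∨ (k % 3 ≠ 0 ∧ k^2 % 3 = 1) := by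
  have h := Nat.pow_mod k 2 3
  have h3 : k % 3 = 0 ∨ k % 3 = 1 ∨ k % 3 = 2 := by omega
  rcases h3 with h3|h3|h3 <;> rw [h3] at h <;> norm_num at h <;> omega

lemma coprime3_iff (k : ℕ) : Nat.Coprime k 3 ↔ k % 3 ≠ 0 := by
  rw [Nat.coprime_comm, Nat.Prime.coprime_iff_not_dvd (by norm_num)]
  omega

lemma coeff_rser (m : ℕ) : PowerSeries.coeff m rser =
    (if ∃ k : ℕ, 0 < k ∧ m = 1 * k ^ 2 then 1 else 0) +
    (if ∃ k : ℕ, 0 < k ∧ m = 2 * k ^ 2 then 1 else 0) +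
    (if ∃ k : ℕ, 0 < k ∧ m = 3 * k ^ 2 then 1 else 0) +
    (if ∃ k : ℕ, 0 < k ∧ m = 6 * k ^ 2 then (1 : ZMod 2) else 0) := by
  simp [rser, thetaC, map_add, PowerSeries.coeff_mk]

lemma coeff_Eser (m : ℕ) : PowerSeries.coeff m Eser =
    if ∃ k : ℕ, Nat.Coprime k 3 ∧ 0 < k ∧ m = k ^ 2 then 1 else 0 := by
  simp [Eser, PowerSeries.coeff_mk]

lemma Eser_zero (a : ℕ) (ha : a % 3 ≠ 1) : PowerSeries.coeff a Eser = 0 := by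
  rw [coeff_Eser, if_neg]
  rintro ⟨k, hc, hk, rfl⟩
  rcases sq_mod3 k with ⟨h1, h2⟩ | ⟨h1, h2⟩
  · exact (coprime3_iff k).mp hc h1
  · exact ha h2

lemma key1 (a : ℕ) (ha : a % 3 = 1) :
    PowerSeries.coeff (2 * a) rser = PowerSeries.coeff a Eser := by
  rw [coeff_rser, coeff_Eser]
  rw [if_neg (show ¬ ∃ k, 0 < k ∧ 2 * a = 1 * k ^ 2 by
    rintro ⟨k, hk, he⟩; rcases sq_mod3 k with ⟨_,h⟩|⟨_,h⟩ <;> omega)]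
  rw [if_neg (show ¬ ∃ k, 0 < k ∧ 2 * a = 3 * k ^ 2 by
    rintro ⟨k, hk, he⟩; omega)]
  rw [if_neg (show ¬ ∃ k, 0 < k ∧ 2 * a = 6 * k ^ 2 by
    rintro ⟨k, hk, he⟩; omega)]
  rw [zero_add, add_zero, add_zero]
  refine if_congr ⟨?_, ?_⟩ rfl rfl
  · rintro ⟨k, hk, he⟩
    refine ⟨k, (coprime3_iff k).mpr ?_, hk, by omega⟩
    rcases sq_mod3 k with ⟨h1, h2⟩ | ⟨h1, h2⟩ <;> omega
  · rintro ⟨k, hc, hk, rfl⟩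
    exact ⟨k, hk, by ring⟩

lemma key2 (a : ℕ) (ha : a % 3 = 1) :
    PowerSeries.coeff a rser = PowerSeries.coeff a Eser := by
  rw [coeff_rser, coeff_Eser]
  rw [if_neg (show ¬ ∃ k, 0 < k ∧ a = 2 * k ^ 2 by
    rintro ⟨k, hk, he⟩; rcases sq_mod3 k with ⟨_,h⟩|⟨_,h⟩ <;> omega)]
  rw [if_neg (show ¬ ∃ k, 0 < k ∧ a = 3 * k ^ 2 by
    rintro ⟨k, hk, he⟩; rcases sq_mod3 k with ⟨_,h⟩|⟨_,h⟩ <;> omega)]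
  rw [if_neg (show ¬ ∃ k, 0 < k ∧ a = 6 * k ^ 2 by
    rintro ⟨k, hk, he⟩; rcases sq_mod3 k with ⟨_,h⟩|⟨_,h⟩ <;> omega)]
  rw [add_zero, add_zero, add_zero]
  refine if_congr ⟨?_, ?_⟩ rfl rfl
  · rintro ⟨k, hk, he⟩
    refine ⟨k, (coprime3_iff k).mpr ?_, hk, by omega⟩
    rcases sq_mod3 k with ⟨h1, h2⟩ | ⟨h1, h2⟩ <;> omega
  · rintro ⟨k, hc, hk, rfl⟩
    exact ⟨k, hk, by ring⟩

lemma key3 (a : ℕ) (ha : a % 3 = 2) (hodd : a % 2 = 1) :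
    PowerSeries.coeff a rser = 0 := by
  rw [coeff_rser]
  rw [if_neg (show ¬ ∃ k, 0 < k ∧ a = 1 * k ^ 2 by
    rintro ⟨k, hk, he⟩; rcases sq_mod3 k with ⟨_,h⟩|⟨_,h⟩ <;> omega)]
  rw [if_neg (show ¬ ∃ k, 0 < k ∧ a = 2 * k ^ 2 by
    rintro ⟨k, hk, he⟩; omega)]
  rw [if_neg (show ¬ ∃ k, 0 < k ∧ a = 3 * k ^ 2 by
    rintro ⟨k, hk, he⟩; rcases sq_mod3 k with ⟨_,h⟩|⟨_,h⟩ <;> omega)]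
  rw [if_neg (show ¬ ∃ k, 0 < k ∧ a = 6 * k ^ 2 by
    rintro ⟨k, hk, he⟩; omega)]
  simp

theorem stmt7 : p3 1 (rser ^ 2) = Eser ^ 4 ∧ p3 2 (rser ^ 2) = Eser ^ 2 := by
  constructor
  · ext n
    rw [show Eser ^ 4 = (Eser ^ 2) ^ 2 by ring]
    simp only [p3, PowerSeries.coeff_mk, coeff_sq]
    by_cases h2 : 2 ∣ n
    · obtain ⟨b, rfl⟩ := h2
      have e1 : 2 * b / 2 = b := Nat.mul_div_cancel_left _ (by norm_num)
      rw [if_pos (dvd_mul_right 2 b), e1]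
      by_cases hb : 2 ∣ b
      · obtain ⟨a, rfl⟩ := hb
        have e2 : 2 * a / 2 = a := Nat.mul_div_cancel_left _ (by norm_num)
        rw [if_pos (dvd_mul_right 2 a), e2]
        by_cases h3 : a % 3 = 1
        · rw [if_pos (by omega), key1 a h3, if_pos (dvd_mul_right 2 _)]
        · rw [if_neg (by omega), Eser_zero a h3]
          simp
      · rw [if_neg hb]
        by_cases h3 : 2 * b % 3 = 1
        · rw [if_pos h3, key3 b (by omega) (by omega)]
          simp
        · rw [if_neg h3]
          simp
    · simp [if_neg h2]
  · ext n
    simp only [p3, PowerSeries.coeff_mk, coeff_sq]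
    by_cases h2 : 2 ∣ n
    · obtain ⟨a, rfl⟩ := h2
      have e1 : 2 * a / 2 = a := Nat.mul_div_cancel_left _ (by norm_num)
      rw [if_pos (dvd_mul_right 2 a), e1]
      by_cases h3 : a % 3 = 1
      · rw [if_pos (by omega), key2 a h3, if_pos (dvd_mul_right 2 _)]
      · rw [if_neg (by omega), Eser_zero a h3]
        simp
    · simp [if_neg h2]
end

section
/- With Gauss-equivalence mod 4q as above (q a power of 2), there is a unique Gauss-class of order 2 in the Gauss group, and its ideals are exactly the (a + 2bqi) with a and b odd. -/
open GaussianInt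

/-- Gauss-equivalence (level `4q`) on (normalized generators of) ideals of odd norm in
`Z[i]` : `α ~ β` iff `N·α ≡ β (mod 4q)` for some integer `N`. -/
def GaussEq (q : ℕ) (α β : GaussianInt) : Prop :=
  ∃ N : ℤ, ((4 * q : ℤ) : GaussianInt) ∣ ((N : GaussianInt) * α - β)

lemma gaussEq_iff (q : ℕ) (α β : GaussianInt) :
    GaussEq q α β ↔ ∃ N : ℤ, (4*q : ℤ) ∣ (N * α.re - β.re) ∧ (4*q : ℤ) ∣ (N * α.im - β.im) := by
  unfold GaussEq
  refine exists_congr fun N => ?_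
  rw [Zsqrtd.intCast_dvd]
  simp

lemma odd_isCoprime_two_pow {a : ℤ} (ha : Odd a) (k : ℕ) : IsCoprime a ((2:ℤ)^k) :=
  IsCoprime.pow_right ((Int.prime_two.coprime_iff_not_dvd.mpr (by
    rw [Int.two_dvd_ne_zero]; exact Int.odd_iff.mp ha)).symm)

lemma keyA (k : ℕ) {a t : ℤ} (ha : Odd a) :
    (∃ N : ℤ, ((2:ℤ)^(k+1)) ∣ N*a - 1 ∧ ((2:ℤ)^(k+1)) ∣ N*t) ↔ ((2:ℤ)^(k+1)) ∣ t := by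
  constructor
  · rintro ⟨N, h1, h2⟩
    have h2d : (2:ℤ) ∣ (2:ℤ)^(k+1) := dvd_pow_self 2 (Nat.succ_ne_zero k)
    have heven : Even (N*a - 1) := by
      obtain ⟨c, hc⟩ := h2d.trans h1; exact ⟨c, by linarith⟩
    have hNa : Odd (N*a) := by
      have := heven.add_odd odd_one; simpa using this
    have hN : Odd N := (Int.odd_mul.mp hNa).1
    exact ((odd_isCoprime_two_pow hN (k+1)).symm).dvd_of_dvd_mul_left h2
  · intro ht
    obtain ⟨u, v, huv⟩ := odd_isCoprime_two_pow ha (k+1)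
    exact ⟨u, ⟨-v, by linear_combination huv⟩, Dvd.dvd.mul_left ht u⟩

/-- There is a unique Gauss-class of order 2, and its ideals are exactly the
`(a + 2bqi)` with `a` and `b` odd: an (ideal with normalized generator) `α` has class
of order exactly 2 iff `α = a + 2bq·i` with `a, b` odd, and moreover all such `α`
are Gauss-equivalent (so they form a single class). -/
theorem stmt13 (e : ℕ) (q : ℕ) (hq : q = 2 ^ e) :
    (∀ α : GaussianInt, Odd α.re → Even α.im →
      ((¬ GaussEq q α 1 ∧ GaussEq q (α ^ 2) 1) ↔ ∃ b : ℤ, Odd b ∧ α.im = 2 * q * b)) ∧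
    (∀ α β : GaussianInt, Odd α.re → Odd β.re →
      (∃ b : ℤ, Odd b ∧ α.im = 2 * q * b) → (∃ b : ℤ, Odd b ∧ β.im = 2 * q * b) →
      GaussEq q α β) := by
  have hM : (4*(q:ℤ)) = 2^(e+2) := by subst hq; push_cast; ring
  have hQ : (2*(q:ℤ)) = 2^(e+1) := by subst hq; push_cast; ring
  constructor
  · intro α ha ht
    rw [gaussEq_iff, gaussEq_iff]
    have h2re : (α^2).re = α.re*α.re - α.im*α.im := by rw [pow_two, Zsqrtd.re_mul]; ring
    have h2im : (α^2).im = 2*(α.re*α.im) := by rw [pow_two, Zsqrtd.im_mul]; ring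
    simp only [h2re, h2im, Zsqrtd.re_one, Zsqrtd.im_one, sub_zero, hM]
    have hodd2 : Odd (α.re*α.re - α.im*α.im) := (ha.mul ha).sub_even (ht.mul_left _)
    rw [show e+2 = (e+1)+1 from rfl, keyA (e+1) ha, keyA (e+1) hodd2]
    have hcancel : ((2:ℤ)^(e+1+1)) ∣ 2*(α.re*α.im) ↔ ((2:ℤ)^(e+1)) ∣ α.re*α.im := by
      rw [pow_succ, mul_comm ((2:ℤ)^(e+1)) 2]
      exact mul_dvd_mul_iff_left two_ne_zero
    have hcancel2 : ((2:ℤ)^(e+1)) ∣ α.re*α.im ↔ ((2:ℤ)^(e+1)) ∣ α.im :=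
      ⟨fun h => ((odd_isCoprime_two_pow ha (e+1)).symm).dvd_of_dvd_mul_left h,
       fun h => h.mul_left _⟩
    rw [hcancel, hcancel2]
    constructor
    · rintro ⟨hn, b, hb⟩
      refine ⟨b, ?_, by rw [hQ, hb]⟩
      rw [Int.not_even_iff_odd.symm]
      rintro ⟨c, hc⟩
      exact hn ⟨c, by rw [hb, hc]; ring⟩
    · rintro ⟨b, hbodd, hb⟩
      rw [hQ] at hb
      constructor
      · rintro ⟨c, hc⟩
        have : b = 2*c := by
          have h1 : (2:ℤ)^(e+1) * b = 2^(e+1) * (2*c) := by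
            rw [← hb, hc]; ring
          exact mul_left_cancel₀ (pow_ne_zero _ two_ne_zero) h1
        exact (Int.not_odd_iff_even.mpr ⟨c, by omega⟩) hbodd
      · exact ⟨b, hb⟩
  · rintro α β ha hb ⟨b, hbo, htb⟩ ⟨c, hco, htc⟩
    rw [gaussEq_iff]
    obtain ⟨u, v, huv⟩ := odd_isCoprime_two_pow ha (e+2)
    rw [← hM] at huv
    refine ⟨u * β.re, ⟨-(β.re*v), by linear_combination β.re * huv⟩, ?_⟩
    have hN : Odd (u * β.re) := by
      have hNa : Odd (u * β.re * α.re) := by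
        have : u * β.re * α.re = β.re + (4*(q:ℤ)) * (-(β.re*v)) := by
          linear_combination β.re * huv
        rw [this]
        exact hb.add_even ⟨2*(q:ℤ)*(-(β.re*v)), by ring⟩
      exact (Int.odd_mul.mp hNa).1
    obtain ⟨d, hd⟩ := (hN.mul hbo).sub_odd hco
    exact ⟨d, by rw [htb, htc]; linear_combination (2*(q:ℤ)) * hd⟩
end

section
/- Fix a power q of 2. Let AMB be the Gauss-class of order 2 (ideals (a+2bqi) with a, b odd). Then (1/2)·θ(AMB) ∈ Z[[x]], and its reduction mod 2 equals F^{4q²+1}, where F = Σ_{n odd, n>0} x^{n²} in Z/2[[x]]. -/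
open GaussianInt PowerSeries Classical

/-- `θ(R) = Σ_{I ∈ R} x^{N(I)} ∈ Z[[x]]`, for `R` the Gauss-class of `ρ`.  Ideals of
odd norm correspond bijectively to their generators `a + 2bi` with `a` odd and `a > 0`,
so the coefficient of `x^m` is the number of such generators of norm `m` that are
Gauss-equivalent to `ρ`. -/
noncomputable def thetaG (q : ℕ) (ρ : GaussianInt) : PowerSeries ℤ :=
  PowerSeries.mk fun m =>
    (Nat.card {α : GaussianInt //
      Odd α.re ∧ 0 < α.re ∧ Even α.im ∧ GaussEq q α ρ ∧ α.norm = (m : ℤ)} : ℤ)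

/-- `F = Σ_{n odd, n > 0} x^{n²}` in `Z/2[[x]]`. -/
noncomputable def Fser : PowerSeries (ZMod 2) :=
  PowerSeries.mk fun n => if ∃ k : ℕ, Odd k ∧ 0 < k ∧ n = k ^ 2 then 1 else 0

/-!
For odd `a`, the element `a + 2ci` is Gauss-equivalent to `1 + 2qi` exactly when `c = qb` with `b`
odd: the forward direction is a congruence computation, and the converse uses that `a` is a unit
modulo `4q` because `q` is a power of `2`. Hence the generators of norm `m` in `AMB` are the
`a ± 2qbi` with `a, b` positive and odd and `a² + 4q²b² = m`, so `θ(AMB)` is twice the series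
counting these representations. Modulo `2`, Frobenius gives `F^{4q²} = Σ_{b odd} x^{4q²b²}`, and
multiplying by `F` produces exactly the same representation count.
-/

open Finset

namespace PowerSeries

theorem expand_card_zmod {p : ℕ} [hp : Fact p.Prime] (f : PowerSeries (ZMod p)) :
    expand p hp.out.ne_zero f = f ^ p := by
  ext n
  rw [coeff_expand, ← coeff_coe_trunc_of_lt n.lt_succ_self (f := f ^ p), ← trunc_trunc_pow,
    coeff_coe_trunc_of_lt n.lt_succ_self, ← Polynomial.coe_pow, ← ZMod.expand_card,
    Polynomial.coeff_coe, Polynomial.coeff_expand hp.out.pos]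
  split_ifs
  · rw [coeff_trunc, if_pos (n.div_le_self p |>.trans_lt n.lt_succ_self)]
  · rfl

theorem expand_pow_card_zmod {p : ℕ} [hp : Fact p.Prime] (k : ℕ) (f : PowerSeries (ZMod p)) :
    expand (p ^ k) (pow_ne_zero k hp.out.ne_zero) f = f ^ p ^ k := by
  induction k with
  | zero => simp
  | succ k ih =>
    have h := expand_mul p hp.out.ne_zero (p ^ k) (pow_ne_zero k hp.out.ne_zero) f
    simp only [← pow_succ'] at h
    rw [h, ih, expand_card_zmod, ← pow_mul, ← pow_succ]

theorem coeff_mul_mk_ite {R : Type*} [Semiring R] (A B : ℕ → Prop) (n : ℕ) :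
    coeff n (mk (fun i => if A i then (1 : R) else 0) * mk fun j => if B j then (1 : R) else 0) =
      (#{x ∈ antidiagonal n | A x.1 ∧ B x.2} : R) := by
  simp only [coeff_mul, coeff_mk, ite_zero_mul_ite_zero, one_mul, Finset.sum_boole]

end PowerSeries

theorem Fser_eq_mk : Fser = mk fun n => if ∃ k : ℕ, Odd k ∧ n = k ^ 2 then 1 else 0 := by
  have h (n k : ℕ) : Odd k ∧ 0 < k ∧ n = k ^ 2 ↔ Odd k ∧ n = k ^ 2 :=
    ⟨fun h => ⟨h.1, h.2.2⟩, fun h => ⟨h.1, h.1.pos, h.2⟩⟩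
  simp only [Fser, h]

theorem Fser_pow_two_pow (k : ℕ) :
    Fser ^ 2 ^ k = mk fun n => if ∃ b : ℕ, Odd b ∧ n = 2 ^ k * b ^ 2 then 1 else 0 := by
  have : Fact (Nat.Prime 2) := ⟨Nat.prime_two⟩
  ext n
  rw [← expand_pow_card_zmod, coeff_expand, coeff_mk, Fser_eq_mk, coeff_mk]
  by_cases hn : 2 ^ k ∣ n
  · obtain ⟨m, rfl⟩ := hn
    simp only [dvd_mul_right, if_true, Nat.mul_div_cancel_left _ (Nat.two_pow_pos k),
      mul_right_inj' (pow_ne_zero k two_ne_zero)]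
  · rw [if_neg hn, if_neg]
    rintro ⟨b, -, rfl⟩
    exact hn (dvd_mul_right _ _)

def oddRepr (c m : ℕ) : Set (ℕ × ℕ) := {p | Odd p.1 ∧ Odd p.2 ∧ p.1 ^ 2 + c * p.2 ^ 2 = m}

noncomputable def oddReprSeries (c : ℕ) : PowerSeries ℤ := mk fun m => (oddRepr c m).ncard

theorem ncard_oddRepr {c : ℕ} (hc : c ≠ 0) (n : ℕ) :
    (oddRepr c n).ncard =
      #{x ∈ antidiagonal n | (∃ b : ℕ, Odd b ∧ x.1 = c * b ^ 2) ∧ ∃ a : ℕ, Odd a ∧ x.2 = a ^ 2} := by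
  have hinj : Function.Injective fun p : ℕ × ℕ => (c * p.2 ^ 2, p.1 ^ 2) := by
    rintro ⟨a, b⟩ ⟨a', b'⟩ h
    simp only [Prod.mk.injEq, mul_right_inj' hc] at h
    exact Prod.ext (Nat.pow_left_injective two_ne_zero h.2) (Nat.pow_left_injective two_ne_zero h.1)
  rw [← Set.ncard_coe_finset, ← Set.ncard_image_of_injective _ hinj]
  congr 1
  ext ⟨i, j⟩
  simp only [oddRepr, Set.mem_image, Prod.exists, Prod.mk.injEq, coe_filter,
    HasAntidiagonal.mem_antidiagonal]
  constructor
  · rintro ⟨a, b, ⟨ha, hb, rfl⟩, rfl, rfl⟩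
    exact ⟨add_comm _ _, ⟨b, hb, rfl⟩, a, ha, rfl⟩
  · rintro ⟨hij, ⟨b, hb, rfl⟩, a, ha, rfl⟩
    exact ⟨a, b, ⟨ha, hb, by rw [← hij, add_comm]⟩, rfl, rfl⟩

theorem map_oddReprSeries_two_pow (k : ℕ) :
    map (Int.castRingHom (ZMod 2)) (oddReprSeries (2 ^ k)) = Fser ^ (2 ^ k + 1) := by
  ext n
  rw [pow_succ, Fser_pow_two_pow, Fser_eq_mk, coeff_mul_mk_ite, coeff_map, oddReprSeries, coeff_mk,
    ncard_oddRepr (pow_ne_zero k two_ne_zero)]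
  simp

theorem gaussEq_iff_s16 {q : ℕ} (hq : q ≠ 0) {α : GaussianInt} (hα : IsCoprime α.re (4 * q)) :
    GaussEq q α ⟨1, 2 * q⟩ ↔ ∃ b : ℤ, Odd b ∧ α.im = 2 * q * b := by
  have hq' : (2 * q : ℤ) ≠ 0 := by positivity
  have h4q : (4 * q : ℤ) = 2 * q * 2 := by ring
  have hdvd (N : ℤ) : ((4 * q : ℤ) : GaussianInt) ∣ (N : GaussianInt) * α - ⟨1, 2 * q⟩ ↔
      (4 * q : ℤ) ∣ N * α.re - 1 ∧ (4 * q : ℤ) ∣ N * α.im - 2 * q := by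
    rw [Zsqrtd.intCast_dvd]
    simp
  simp only [GaussEq, hdvd]
  constructor
  · rintro ⟨N, ⟨t, ht⟩, him⟩
    have hN : IsCoprime N (2 * q) :=
      IsCoprime.of_isCoprime_of_dvd_right ⟨α.re, -t, by linear_combination ht⟩ ⟨2, h4q⟩
    obtain ⟨b, hb⟩ : (2 * q : ℤ) ∣ α.im := by
      refine hN.symm.dvd_of_dvd_mul_left ?_
      simpa using (Dvd.intro 2 h4q.symm).trans him |>.add (dvd_refl (2 * q : ℤ))
    obtain ⟨s, hs⟩ := him
    have hNb : N * b - 1 = 2 * s := mul_left_cancel₀ hq' (by linear_combination hs - N * hb)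
    exact ⟨b, (Int.odd_mul.mp (show Odd (N * b) from ⟨s, by linarith⟩)).2, hb⟩
  · rintro ⟨b, hb, him⟩
    obtain ⟨N, M, hNM⟩ := hα
    have hN : Odd N :=
      (Int.odd_mul.mp (show Odd (N * α.re) from ⟨-2 * q * M, by linear_combination hNM⟩)).1
    refine ⟨N, ⟨-M, by linear_combination hNM⟩, ?_⟩
    obtain ⟨k, hk⟩ := Int.odd_mul.mpr ⟨hN, hb⟩
    exact ⟨k, by rw [him]; linear_combination (2 * q : ℤ) * hk⟩

def ambGen (q : ℕ) (x : ℤˣ × (ℕ × ℕ)) : GaussianInt := ⟨x.2.1, x.1 * (2 * q * x.2.2)⟩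

theorem ambGen_injOn {q : ℕ} (hq : q ≠ 0) (c m : ℕ) :
    Set.InjOn (ambGen q) (Set.univ ×ˢ oddRepr c m) := by
  rintro ⟨u, a, b⟩ ⟨-, -, hb, -⟩ ⟨u', a', b'⟩ ⟨-, -, hb', -⟩ h
  simp only [ambGen, Zsqrtd.mk.injEq, Nat.cast_inj] at h
  obtain ⟨rfl, him⟩ := h
  have hbb : b = b' := by
    simpa [Int.natAbs_mul, hq] using congrArg Int.natAbs him
  subst hbb
  rw [Units.ext (mul_right_cancel₀ (by simp [hq, hb.pos.ne'] : (2 * q * b : ℤ) ≠ 0) him)]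

theorem isCoprime_four_mul_of_odd {e q : ℕ} (hq : q = 2 ^ e) {a : ℤ} (ha : Odd a) :
    IsCoprime a (4 * q) := by
  have h : (4 * q : ℤ) = 2 ^ (e + 2) := by rw [hq]; push_cast; ring
  exact h ▸ (Int.isCoprime_two_right.mpr ha).pow_right

theorem mem_ambClass_iff {e q : ℕ} (hq : q = 2 ^ e) (m : ℕ) (α : GaussianInt) :
    (Odd α.re ∧ 0 < α.re ∧ Even α.im ∧ GaussEq q α ⟨1, 2 * q⟩ ∧ α.norm = m) ↔
      α ∈ ambGen q '' (Set.univ ×ˢ oddRepr ((2 * q) ^ 2) m) := by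
  have hq0 : q ≠ 0 := hq ▸ pow_ne_zero e two_ne_zero
  have hnorm (z : GaussianInt) : z.norm = z.re ^ 2 + z.im ^ 2 := by rw [Zsqrtd.norm_def]; ring
  constructor
  · rintro ⟨hodd, hpos, -, hα, hm⟩
    obtain ⟨b, hb, him⟩ := (gaussEq_iff_s16 hq0 (isCoprime_four_mul_of_odd hq hodd)).mp hα
    obtain ⟨u, hu⟩ : ∃ u : ℤˣ, b = u * b.natAbs := by
      rcases Int.natAbs_eq b with h | h
      exacts [⟨1, by simpa using h⟩, ⟨-1, by simpa using h⟩]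
    refine ⟨(u, α.re.toNat, b.natAbs), ⟨trivial, ?_, Int.natAbs_odd.mpr hb, ?_⟩, ?_⟩
    · rwa [← Int.odd_coe_nat, Int.toNat_of_nonneg hpos.le]
    · zify
      rw [Int.toNat_of_nonneg hpos.le, sq_abs, ← hm, hnorm, him]
      ring
    · ext
      · exact Int.toNat_of_nonneg hpos.le
      · simp only [ambGen]
        linear_combination -him - 2 * q * hu
  · rintro ⟨⟨u, a, b⟩, ⟨-, ha, hb, hab⟩, rfl⟩
    have hsign : Odd (u * b : ℤ) ∧ ((u : ℤ) * (2 * q * b)) ^ 2 = (2 * q * b) ^ 2 := by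
      rcases Int.units_eq_one_or u with rfl | rfl <;> simpa using hb
    have ha' : Odd (a : ℤ) := by exact_mod_cast ha
    refine ⟨ha', Int.natCast_pos.mpr ha.pos, ⟨u * q * b, by simp only [ambGen]; ring⟩,
      (gaussEq_iff_s16 hq0 (isCoprime_four_mul_of_odd hq ha')).mpr
        ⟨u * b, hsign.1, by simp only [ambGen]; ring⟩, ?_⟩
    rw [hnorm]
    simp only [ambGen, hsign.2, ← hab]
    push_cast
    ring

theorem card_ambClass {e q : ℕ} (hq : q = 2 ^ e) (m : ℕ) :
    Nat.card {α : GaussianInt //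
      Odd α.re ∧ 0 < α.re ∧ Even α.im ∧ GaussEq q α ⟨1, 2 * q⟩ ∧ α.norm = m} =
      2 * (oddRepr ((2 * q) ^ 2) m).ncard := by
  rw [Nat.card_congr (Equiv.subtypeEquivRight (mem_ambClass_iff hq m)), Nat.card_coe_set_eq,
    (ambGen_injOn (hq ▸ pow_ne_zero e two_ne_zero) _ _).ncard_image, Set.ncard_prod, Set.ncard_univ,
    Nat.card_eq_fintype_card, Fintype.card_units_int]

theorem thetaG_amb {e q : ℕ} (hq : q = 2 ^ e) :
    thetaG q ⟨1, 2 * q⟩ = 2 * oddReprSeries ((2 * q) ^ 2) := by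
  ext m
  rw [thetaG, coeff_mk, card_ambClass hq, oddReprSeries, ← map_ofNat C 2, coeff_C_mul, coeff_mk]
  push_cast
  rfl

/-- `AMB` is the Gauss-class of `1 + 2q·i` (the unique class of order 2, whose ideals
are the `(a + 2bqi)` with `a, b` odd).  Then `(1/2)·θ(AMB)` lies in `Z[[x]]` and its
mod 2 reduction is `F^{4q²+1}`. -/
theorem stmt16 (e : ℕ) (q : ℕ) (hq : q = 2 ^ e) :
    ∃ h : PowerSeries ℤ, 2 * h = thetaG q ⟨1, 2 * q⟩ ∧
      PowerSeries.map (Int.castRingHom (ZMod 2)) h = Fser ^ (4 * q ^ 2 + 1) := by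
  refine ⟨oddReprSeries ((2 * q) ^ 2), (thetaG_amb hq).symm, ?_⟩
  have h : (2 * q) ^ 2 = 2 ^ (2 * e + 2) := by rw [hq]; ring
  rw [h, map_oddReprSeries_two_pow, ← h]
  ring
end
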